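/- arXiv:2307.07460 — 5 statements merged into one kernel-verified Lean document; each statement's English description precedes it below -/
import Mathlib

section
/- The subword order on words over a finite alphabet is a well-quasi-order: every infinite sequence of words contains an increasing pair x_i ≼ x_j with i < j. -/
/-! Higman's lemma in Mathlib makes `List.SublistForall₂ r` partially well-ordered whenever `r`
is; over a finite alphabet equality is a well-quasi-order, and `SublistForall₂ (· = ·)` is the
subword order. -/

theorem List.sublistForall₂_eq_iff_sublist {α : Type*} {l₁ l₂ : List α} :
    List.SublistForall₂ (· = ·) l₁ l₂ ↔ l₁.Sublist l₂ := by
  rw [List.sublistForall₂_iff, List.forall₂_eq_eq_eq]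
  exact ⟨fun ⟨_, rfl, h⟩ => h, fun h => ⟨l₁, rfl, h⟩⟩

/-- Higman's lemma: the subword order on words over a finite alphabet is a
well-quasi-order: every infinite sequence contains an increasing pair. -/
theorem sublist_wqo {α : Type*} [Finite α] (f : ℕ → List α) :
    ∃ i j : ℕ, i < j ∧ (f i).Sublist (f j) := by
  have hEq : (Set.univ : Set α).PartiallyWellOrderedOn (· = ·) :=
    Set.finite_univ.partiallyWellOrderedOn
  obtain ⟨i, j, hij, hsub⟩ := (hEq.partiallyWellOrderedOn_sublistForall₂ (· = ·)).exists_lt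
    (f := f) fun n x _ => Set.mem_univ x
  exact ⟨i, j, hij, List.sublistForall₂_eq_iff_sublist.mp hsub⟩
end

section
/- The priority order on words over a finite priority alphabet is a well-quasi-order. -/
/-- The priority embedding underlying the priority order: `u = u₁…u_k`,
`v = v₁u₁v₂u₂…v_ku_k` where each `vᵢ` consists of letters of priority at most
that of `uᵢ`. -/
inductive PrioEmb {α : Type*} (prio : α → ℕ) : List α → List α → Prop
  | nil : PrioEmb prio [] []
  | cons (a : α) {u v : List α} (w : List α) (hw : ∀ b ∈ w, prio b ≤ prio a)
      (h : PrioEmb prio u v) : PrioEmb prio (a :: u) (w ++ a :: v)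

/-- The priority order: `u ⊑ v` iff `u = ε`, or `u = u₁…u_k` and
`v = v₁u₁…v_ku_k` with each `vᵢ` over letters of priority at most that of `uᵢ`. -/
def PrioLE {α : Type*} (prio : α → ℕ) (u v : List α) : Prop :=
  u = [] ∨ PrioEmb prio u v
/-!
We show by induction on `D` that `PrioEmb` is a well-quasi-order on the words all of whose
letters have priority `< D`. A word with letters of priority `≤ D`, at least one of them `D`,
factors as `x · a₁y₁ ⋯ aₖyₖ · a y` where `aᵢ` and `a` have priority `D` while `x`, `yᵢ` and `y`
are of lower priority. Since a letter of priority `D` may absorb anything in front of it, `u`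
embeds into `v` as soon as `x` embeds into `x'`, the blocks `(aᵢ, yᵢ)` embed into those of `v`
in the sense of Higman's lemma (same letter, embedded words), and the last blocks have the same
letter and embedded words. Each of the three components is well-quasi-ordered (by induction, by
Higman's lemma, and by finiteness of the alphabet), hence so is their product.
-/

namespace PrioEmb

variable {α : Type*} {prio : α → ℕ}

theorem refl : ∀ u : List α, PrioEmb prio u u
  | [] => nil
  | a :: u => cons a [] (by simp) (refl u)

theorem append {u v u' v' : List α} (h : PrioEmb prio u v) (h' : PrioEmb prio u' v') :
    PrioEmb prio (u ++ u') (v ++ v') := by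
  induction h with
  | nil => exact h'
  | cons a w hw _ ih => simpa using cons a w hw ih

theorem forall_prio_le {u v : List α} {p : ℕ} (h : PrioEmb prio u v)
    (hu : ∀ b ∈ u, prio b ≤ p) : ∀ c ∈ v, prio c ≤ p := by
  induction h with
  | nil => simp
  | cons a w hw _ ih =>
    rw [List.forall_mem_cons] at hu
    simp only [List.forall_mem_append, List.forall_mem_cons]
    exact ⟨fun b hb => (hw b hb).trans hu.1, hu.1, ih hu.2⟩

theorem exists_split_of_append :
    ∀ (s : List α) {t v : List α}, PrioEmb prio (s ++ t) v →
      ∃ vs vt, v = vs ++ vt ∧ PrioEmb prio s vs ∧ PrioEmb prio t vt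
  | [], _, _, h => ⟨[], _, rfl, nil, h⟩
  | a :: s, _, _, h => by
    cases h with
    | cons _ w hw h =>
      obtain ⟨vs, vt, rfl, hs, ht⟩ := exists_split_of_append s h
      exact ⟨w ++ a :: vs, vt, by simp, cons a w hw hs, ht⟩

theorem trans {u v w : List α} (h₁ : PrioEmb prio u v) (h₂ : PrioEmb prio v w) :
    PrioEmb prio u w := by
  induction h₁ generalizing w with
  | nil => exact h₂
  | cons a x hx _ ih =>
    obtain ⟨wx, wa, rfl, hxw, haw⟩ := exists_split_of_append x h₂
    cases haw with
    | cons _ y hy h =>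
      have hwx := hxw.forall_prio_le hx
      rw [← List.append_assoc]
      refine cons a (wx ++ y) ?_ (ih h)
      simp only [List.mem_append]
      rintro b (hb | hb)
      exacts [hwx b hb, hy b hb]

instance : IsPreorder (List α) (PrioEmb prio) where
  refl := refl
  trans _ _ _ := trans

end PrioEmb

section Blocks

variable {α : Type*} (prio : α → ℕ)

def wordsBelow (D : ℕ) : Set (List α) := {w | ∀ a ∈ w, prio a < D}

def blocksAt (D : ℕ) : Set (α × List α) := (prio ⁻¹' {D}) ×ˢ wordsBelow prio D

def flattenBlocks (l : List (α × List α)) : List α := l.flatMap fun p => p.1 :: p.2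

def BlockEmb (p q : α × List α) : Prop := p.1 = q.1 ∧ PrioEmb prio p.2 q.2

instance : IsPreorder (α × List α) (BlockEmb prio) where
  refl p := ⟨rfl, PrioEmb.refl p.2⟩
  trans _ _ _ h₁ h₂ := ⟨h₁.1.trans h₂.1, h₁.2.trans h₂.2⟩

variable {prio}

@[simp]
theorem mem_wordsBelow {D : ℕ} {w : List α} : w ∈ wordsBelow prio D ↔ ∀ a ∈ w, prio a < D :=
  Iff.rfl

theorem wordsBelow_zero : wordsBelow prio 0 = {[]} := by
  ext w
  simp [List.eq_nil_iff_forall_not_mem]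

@[simp]
theorem flattenBlocks_cons (p : α × List α) (l : List (α × List α)) :
    flattenBlocks (p :: l) = p.1 :: (p.2 ++ flattenBlocks l) :=
  rfl

theorem exists_eq_append_flattenBlocks {D : ℕ} :
    ∀ w ∈ wordsBelow prio (D + 1), ∃ x l, w = x ++ flattenBlocks l ∧
      x ∈ wordsBelow prio D ∧ ∀ p ∈ l, p ∈ blocksAt prio D
  | [], _ => ⟨[], [], rfl, by simp, by simp⟩
  | c :: t, hw => by
    rw [mem_wordsBelow, List.forall_mem_cons] at hw
    obtain ⟨x, l, rfl, hx, hl⟩ := exists_eq_append_flattenBlocks t hw.2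
    rcases (Nat.lt_succ_iff.1 hw.1).lt_or_eq with hc | hc
    · exact ⟨c :: x, l, rfl, List.forall_mem_cons.2 ⟨hc, hx⟩, hl⟩
    · exact ⟨[], (c, x) :: l, by simp, by simp, List.forall_mem_cons.2 ⟨⟨hc, hx⟩, hl⟩⟩

theorem flattenBlocks_mem_wordsBelow_succ {D : ℕ} {l : List (α × List α)}
    (hl : ∀ p ∈ l, p ∈ blocksAt prio D) : flattenBlocks l ∈ wordsBelow prio (D + 1) := by
  simp only [flattenBlocks, mem_wordsBelow, List.mem_flatMap, List.mem_cons]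
  rintro b ⟨p, hp, rfl | hb⟩
  · exact Nat.lt_succ_of_le (hl p hp).1.le
  · exact Nat.lt_succ_of_lt ((hl p hp).2 b hb)

/-- The prefix `w` is there so that the unmatched blocks of `l'` can be absorbed
(case `cons_right`). -/
theorem prioEmb_flattenBlocks_append {D : ℕ} {l l' : List (α × List α)}
    (hs : List.SublistForall₂ (BlockEmb prio) l l') (hl : ∀ p ∈ l, prio p.1 = D)
    (hl' : flattenBlocks l' ∈ wordsBelow prio (D + 1)) {a : α} {x x' : List α}
    (ha : prio a = D) (hx : PrioEmb prio x x') {w : List α} (hw : w ∈ wordsBelow prio (D + 1)) :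
    PrioEmb prio (flattenBlocks l ++ a :: x) (w ++ (flattenBlocks l' ++ a :: x')) := by
  induction hs generalizing w with
  | nil =>
    rw [← List.append_assoc]
    refine .cons a _ (fun b hb => ?_) hx
    rw [ha, ← Nat.lt_succ_iff]
    exact (List.mem_append.1 hb).elim (hw b) (hl' b)
  | @cons p q l l' hpq _ ih =>
    simp only [flattenBlocks_cons, List.forall_mem_cons, mem_wordsBelow,
      List.forall_mem_append] at hl hl'
    have htail := ih hl.2 hl'.2.2 (w := []) (by simp)
    rw [List.nil_append] at htail
    have hwq : ∀ b ∈ w, prio b ≤ prio q.1 := fun b hb => by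
      rw [← hpq.1, hl.1]
      exact Nat.lt_succ_iff.1 (hw b hb)
    simpa [hpq.1] using PrioEmb.cons q.1 w hwq (hpq.2.append htail)
  | @cons_right q l l' _ ih =>
    simp only [flattenBlocks_cons, mem_wordsBelow, List.forall_mem_cons,
      List.forall_mem_append] at hl'
    have hwq : w ++ q.1 :: q.2 ∈ wordsBelow prio (D + 1) := by
      simp only [mem_wordsBelow, List.forall_mem_append, List.forall_mem_cons]
      exact ⟨hw, hl'.1, hl'.2.1⟩
    simpa using ih hl hl'.2.2 hwq

def assembleWord : List α × (α × List α) × List (α × List α) → List α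
  | (x, (a, y), l) => x ++ (flattenBlocks l ++ a :: y)

theorem wordsBelow_succ_subset {D : ℕ} :
    wordsBelow prio (D + 1) ⊆ wordsBelow prio D ∪ assembleWord ''
      (wordsBelow prio D ×ˢ (blocksAt prio D ×ˢ {l | ∀ p ∈ l, p ∈ blocksAt prio D})) := by
  intro w hw
  obtain ⟨x, l, rfl, hx, hl⟩ := exists_eq_append_flattenBlocks w hw
  rcases l.eq_nil_or_concat with rfl | ⟨l, p, rfl⟩
  · left
    simpa [flattenBlocks] using hx
  · right
    simp only [List.concat_eq_append, List.forall_mem_append, List.forall_mem_singleton] at hl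
    exact ⟨(x, p, l), ⟨hx, hl.2, hl.1⟩, by simp [assembleWord, flattenBlocks]⟩

theorem partiallyWellOrderedOn_wordsBelow_succ [Finite α] {D : ℕ}
    (h : (wordsBelow prio D).PartiallyWellOrderedOn (PrioEmb prio)) :
    (wordsBelow prio (D + 1)).PartiallyWellOrderedOn (PrioEmb prio) := by
  have hblocks : (blocksAt prio D).PartiallyWellOrderedOn (BlockEmb prio) :=
    (Set.toFinite (prio ⁻¹' {D})).partiallyWellOrderedOn.prod h
  have hdecomp := h.prod (hblocks.prod (hblocks.partiallyWellOrderedOn_sublistForall₂ _))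
  refine (h.union (hdecomp.image_of_monotone_on ?_)).mono wordsBelow_succ_subset
  rintro ⟨x, ⟨a, y⟩, l⟩ ⟨-, ⟨ha, -⟩, hl⟩ ⟨x', ⟨a', y'⟩, l'⟩ ⟨-, -, hl'⟩ ⟨hx, ⟨rfl, hy⟩, hs⟩
  exact hx.append (prioEmb_flattenBlocks_append hs (fun p hp => (hl p hp).1)
    (flattenBlocks_mem_wordsBelow_succ hl') ha hy (w := []) (by simp))

variable (prio)

theorem partiallyWellOrderedOn_wordsBelow [Finite α] :
    ∀ D, (wordsBelow prio D).PartiallyWellOrderedOn (PrioEmb prio)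
  | 0 => by simp [wordsBelow_zero]
  | D + 1 => partiallyWellOrderedOn_wordsBelow_succ (partiallyWellOrderedOn_wordsBelow D)

theorem PrioEmb.wellQuasiOrdered [Finite α] : WellQuasiOrdered (PrioEmb prio) := by
  obtain ⟨B, hB⟩ := (Set.finite_range prio).bddAbove
  refine Set.partiallyWellOrderedOn_univ_iff.1
    ((partiallyWellOrderedOn_wordsBelow prio (B + 1)).mono fun w _ a _ => ?_)
  exact Nat.lt_succ_of_le (hB ⟨a, rfl⟩)

end Blocks

/-- The priority order on words over a finite priority alphabet is a
well-quasi-order. -/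
theorem prioLE_wqo {α : Type*} [Finite α] (prio : α → ℕ)
    (f : ℕ → List α) : ∃ i j : ℕ, i < j ∧ PrioLE prio (f i) (f j) := by
  obtain ⟨i, j, hij, h⟩ := PrioEmb.wellQuasiOrdered prio f
  exact ⟨i, j, hij, .inr h⟩
end

section
/- The block order is finer than the subword order: for all words u, v over a priority alphabet, u block-smaller-than v implies u is a subword of v. -/
/-- Glue together a decomposition into blocks and separator letters:
`glue [(u₀,x₀),…,(u_{n-1},x_{n-1})] u_n = u₀x₀u₁x₁⋯x_{n-1}u_n`. -/
def glue {α : Type*} (ps : List (List α × α)) (last : List α) : List α :=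
  (ps.map (fun p => p.1 ++ [p.2])).flatten ++ last

/-- The `i`-th block of a decomposition (`last` for the final index). -/
def blockAt {α : Type*} (ps : List (List α × α)) (last : List α) (i : ℕ) :
    List α :=
  if h : i < ps.length then (ps.get ⟨i, h⟩).1 else last

/-- The blockSegment `v_i y_i v_{i+1} ⋯ y_{j-1} v_j` of a decomposition. -/
def blockSegment {α : Type*} (ps : List (List α × α)) (last : List α) (i j : ℕ) :
    List α :=
  glue ((ps.take j).drop i) (blockAt ps last j)

/-- The block order at priority level `p`: at level `0` (a single priority) it
is the subword order; at level `p+1`, either both words consist solely of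
letters of priority `p+1` and are related by the subword order, or both words
are split at their priority-`p+1` letters into sub-blocks of lower priority and
there is a strictly increasing witness block map `φ` sending the first block to
the first and the last block to the last, such that blocks embed recursively in
the block order and each separator letter embeds as a subword into the
corresponding blockSegment of the larger word. -/
def BlockLE {α : Type*} (prio : α → ℕ) : ℕ → List α → List α → Prop
  | 0, u, v => u.Sublist v
  | (p+1), u, v =>
      ((∀ a ∈ u, prio a = p + 1) ∧ (∀ a ∈ v, prio a = p + 1) ∧ u.Sublist v) ∨
      ∃ (us : List (List α × α)) (ulast : List α)
        (vs : List (List α × α)) (vlast : List α) (φ : ℕ → ℕ),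
        u = glue us ulast ∧ v = glue vs vlast ∧
        (∀ q ∈ us, prio q.2 = p + 1 ∧ ∀ a ∈ q.1, prio a ≤ p) ∧
        (∀ a ∈ ulast, prio a ≤ p) ∧
        (∀ q ∈ vs, prio q.2 = p + 1 ∧ ∀ a ∈ q.1, prio a ≤ p) ∧
        (∀ a ∈ vlast, prio a ≤ p) ∧
        (∀ i j, i < j → j ≤ us.length → φ i < φ j) ∧
        φ 0 = 0 ∧ φ us.length = vs.length ∧
        (∀ i ≤ us.length,
          BlockLE prio p (blockAt us ulast i) (blockAt vs vlast (φ i))) ∧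
        (∀ i (h : i < us.length),
          [(us.get ⟨i, h⟩).2].Sublist (blockSegment vs vlast (φ i) (φ (i + 1))))

/-!
At a level `p + 1` the witness decomposition `u = u₀x₀u₁⋯xₙ₋₁uₙ` is embedded into
`v = v₀y₀v₁⋯yₘ₋₁vₘ` from right to left: `uᵢ ⊑ v_{φ i}` by induction on the level, and
since `xᵢ` has priority `p + 1` while the blocks of `v` have lower priority, the letter
`xᵢ`, which occurs in `v_{φ i} y_{φ i} ⋯ v_{φ (i+1)}`, is one of the separators
`y_{φ i}, …, y_{φ (i+1) - 1}`. Hence `uᵢxᵢ` embeds into `v_{φ i} y_{φ i} ⋯ v_{φ(i+1)-1} y_{φ(i+1)-1}`,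
and these pieces of `v` are disjoint for distinct `i` because `φ` is strictly increasing.
-/

section Decomposition

variable {α : Type*}

/-- `vᵢ yᵢ ⋯ vⱼ₋₁ yⱼ₋₁`, i.e. `blockSegment ps last i j` without its final block `vⱼ`. -/
def blocksBetween (ps : List (List α × α)) (i j : ℕ) : List α :=
  glue ((ps.take j).drop i) []

lemma blockSegment_eq_blocksBetween_append (ps : List (List α × α)) (last : List α)
    (i j : ℕ) : blockSegment ps last i j = blocksBetween ps i j ++ blockAt ps last j := by
  simp [blockSegment, blocksBetween, glue]

lemma blocksBetween_append (ps : List (List α × α)) {a b c : ℕ} (hab : a ≤ b)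
    (hbc : b ≤ c) : blocksBetween ps a b ++ blocksBetween ps b c = blocksBetween ps a c := by
  simp only [blocksBetween, glue, List.append_nil, ← List.flatten_append, ← List.map_append]
  rw [List.drop_take, List.drop_take, List.drop_take,
    show c - a = (b - a) + (c - b) by omega, List.take_add, List.drop_drop,
    show a + (b - a) = b by omega]

@[simp]
lemma blocksBetween_self (ps : List (List α × α)) (i : ℕ) : blocksBetween ps i i = [] := by
  simp [blocksBetween, glue]

lemma blocksBetween_eq_cons {ps : List (List α × α)} {i j : ℕ} (hij : i < j)
    (hi : i < ps.length) :
    blocksBetween ps i j = ps[i].1 ++ ps[i].2 :: blocksBetween ps (i + 1) j := by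
  simp only [blocksBetween, glue, List.drop_take, List.drop_eq_getElem_cons hi,
    show j - i = j - (i + 1) + 1 by omega, List.take_succ_cons]
  simp

lemma blocksBetween_succ {ps : List (List α × α)} {i : ℕ} (hi : i < ps.length) :
    blocksBetween ps i (i + 1) = ps[i].1 ++ [ps[i].2] := by
  simp [blocksBetween_eq_cons (Nat.lt_succ_self i) hi]

lemma blockSegment_split (ps : List (List α × α)) (last : List α) {a b c : ℕ}
    (hab : a ≤ b) (hbc : b ≤ c) :
    blockSegment ps last a c = blocksBetween ps a b ++ blockSegment ps last b c := by
  rw [blockSegment_eq_blocksBetween_append, blockSegment_eq_blocksBetween_append,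
    ← blocksBetween_append ps hab hbc, List.append_assoc]

lemma blockSegment_self (ps : List (List α × α)) (last : List α) (i : ℕ) :
    blockSegment ps last i i = blockAt ps last i := by
  simp [blockSegment_eq_blocksBetween_append]

lemma blockSegment_zero_length_eq_glue (ps : List (List α × α)) (last : List α) :
    blockSegment ps last 0 ps.length = glue ps last := by
  simp [blockSegment, blockAt]

lemma blockAt_of_lt {ps : List (List α × α)} {last : List α} {i : ℕ}
    (hi : i < ps.length) : blockAt ps last i = ps[i].1 :=
  dif_pos hi

lemma notMem_blockAt {ps : List (List α × α)} {last : List α} {x : α}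
    (hps : ∀ q ∈ ps, x ∉ q.1) (hlast : x ∉ last) (i : ℕ) : x ∉ blockAt ps last i := by
  unfold blockAt
  split_ifs with hi
  · exact hps _ (List.get_mem ps ⟨i, hi⟩)
  · exact hlast

lemma append_singleton_sublist_blocksBetween {ps : List (List α × α)} {last w : List α}
    {x : α} {i j : ℕ} (hij : i < j) (hi : i < ps.length)
    (hps : ∀ q ∈ ps, x ∉ q.1) (hlast : x ∉ last)
    (hw : w.Sublist (blockAt ps last i)) (hx : [x].Sublist (blockSegment ps last i j)) :
    (w ++ [x]).Sublist (blocksBetween ps i j) := by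
  rw [blockAt_of_lt hi] at hw
  rw [blockSegment_eq_blocksBetween_append, blocksBetween_eq_cons hij hi,
    List.singleton_sublist] at hx
  rw [blocksBetween_eq_cons hij hi]
  refine hw.append (List.singleton_sublist.mpr ?_)
  simp only [List.mem_append, List.mem_cons] at hx ⊢
  rcases hx with (hx | hx) | hx
  · exact absurd hx (hps _ (List.getElem_mem hi))
  · exact hx
  · exact absurd hx (notMem_blockAt hps hlast j)

theorem glue_sublist_glue {us vs : List (List α × α)} {ulast vlast : List α} {φ : ℕ → ℕ}
    (hsep_vs : ∀ q ∈ us, ∀ q' ∈ vs, q.2 ∉ q'.1) (hsep_vlast : ∀ q ∈ us, q.2 ∉ vlast)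
    (hφ_lt : ∀ i j, i < j → j ≤ us.length → φ i < φ j)
    (hφ_zero : φ 0 = 0) (hφ_length : φ us.length = vs.length)
    (hblocks : ∀ i ≤ us.length, (blockAt us ulast i).Sublist (blockAt vs vlast (φ i)))
    (hseps : ∀ i (h : i < us.length),
      [us[i].2].Sublist (blockSegment vs vlast (φ i) (φ (i + 1)))) :
    (glue us ulast).Sublist (glue vs vlast) := by
  have hφ_le : ∀ i ≤ us.length, φ i ≤ vs.length := fun i hi => by
    rcases hi.lt_or_eq with hi | rfl
    · exact hφ_length ▸ (hφ_lt i _ hi le_rfl).le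
    · exact hφ_length.le
  have suffix : ∀ i ≤ us.length, (blockSegment us ulast i us.length).Sublist
      (blockSegment vs vlast (φ i) vs.length) := by
    intro i hi
    induction hi using Nat.decreasingInduction with
    | self =>
      rw [hφ_length, blockSegment_self, blockSegment_self]
      simpa only [hφ_length] using hblocks us.length le_rfl
    | of_succ i hi ih =>
      have hφi : φ i < φ (i + 1) := hφ_lt i (i + 1) (Nat.lt_succ_self i) hi
      rw [blockSegment_split us ulast (Nat.le_succ i) hi, blocksBetween_succ hi,
        blockSegment_split vs vlast hφi.le (hφ_le _ hi)]
      have hφi_length : φ i < vs.length := hφi.trans_le (hφ_le _ hi)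
      refine List.Sublist.append ?_ ih
      exact append_singleton_sublist_blocksBetween hφi hφi_length
        (hsep_vs _ (List.getElem_mem hi)) (hsep_vlast _ (List.getElem_mem hi))
        (blockAt_of_lt hi ▸ hblocks i hi.le) (hseps i hi)
  simpa only [blockSegment_zero_length_eq_glue, hφ_zero] using suffix 0 (Nat.zero_le _)

end Decomposition

theorem blockLE_sublist_general {α : Type*} (prio : α → ℕ) (d : ℕ)
    (u v : List α)
    (h : BlockLE prio d u v) : u.Sublist v := by
  induction d generalizing u v with
  | zero => exact h
  | succ p ih =>
    rcases h with ⟨-, -, hsub⟩ | ⟨us, ulast, vs, vlast, φ, rfl, rfl, hus, -, hvs, hvlast,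
      hφ_lt, hφ_zero, hφ_length, hblocks, hseps⟩
    · exact hsub
    have hsep_low : ∀ q ∈ us, ∀ a, prio a ≤ p → q.2 ≠ a := fun q hq a ha hqa => by
      rw [← hqa, (hus q hq).1] at ha
      omega
    exact glue_sublist_glue
      (fun q hq q' hq' hmem => hsep_low q hq _ ((hvs q' hq').2 _ hmem) rfl)
      (fun q hq hmem => hsep_low q hq _ (hvlast _ hmem) rfl)
      hφ_lt hφ_zero hφ_length (fun i hi => ih _ _ (hblocks i hi)) hseps

/-- The block order is finer than the subword order. -/
theorem blockLE_sublist {α : Type*} (prio : α → ℕ) (d : ℕ)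
    (hd : ∀ a : α, prio a ≤ d) (u v : List α)
    (h : BlockLE prio d u v) : u.Sublist v :=
  blockLE_sublist_general prio d u v h
end

section
/- Inserting a letter of strictly higher priority can break the block order: over the alphabet {0,1,2} with priorities 0 < 1 < 2 (each letter's priority equal to its value), the word 1·1 is not block-smaller than 1·2·1. -/
lemma mem_glue_of_mem {α : Type*} {ps : List (List α × α)} (last : List α)
    {q : List α × α} (hq : q ∈ ps) : q.2 ∈ glue ps last := by
  simp only [glue, List.mem_append, List.mem_flatten, List.mem_map]
  exact Or.inl ⟨_, ⟨q, hq, rfl⟩, List.mem_append_right _ (List.mem_singleton_self _)⟩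

@[simp]
lemma glue_nil {α : Type*} (last : List α) : glue [] last = last := by
  simp [glue]

lemma eq_nil_of_forall_mem_glue_prio_le {α : Type*} {prio : α → ℕ} {p : ℕ}
    {ps : List (List α × α)} {last : List α} (hsep : ∀ q ∈ ps, prio q.2 = p + 1)
    (hle : ∀ a ∈ glue ps last, prio a ≤ p) : ps = [] := by
  refine List.eq_nil_iff_forall_not_mem.mpr fun q hq => ?_
  have := hle _ (mem_glue_of_mem last hq)
  rw [hsep q hq] at this
  omega

/-- Such a `u` has a single block, which `φ` must send to both the first and the last block
of `v`. -/
theorem BlockLE.forall_prio_le_of_forall_prio_le {α : Type*} {prio : α → ℕ} {p : ℕ}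
    {u v : List α} (h : BlockLE prio (p + 1) u v) (hu : u ≠ [])
    (hlow : ∀ a ∈ u, prio a ≤ p) : ∀ a ∈ v, prio a ≤ p := by
  rcases h with ⟨htop, -, -⟩ |
    ⟨us, ulast, vs, vlast, φ, rfl, rfl, hus, -, -, hvlast, -, hφ0, hφlen, -, -⟩
  · obtain ⟨a, ha⟩ := List.exists_mem_of_ne_nil u hu
    have := hlow a ha
    rw [htop a ha] at this
    omega
  · obtain rfl : us = [] := eq_nil_of_forall_mem_glue_prio_le (fun q hq => (hus q hq).1) hlow
    obtain rfl : vs = [] := List.length_eq_zero_iff.mp (by simpa [hφ0] using hφlen.symm)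
    simpa using hvlast

/-- Inserting a letter of strictly higher priority can break the block order:
over the alphabet `{0,1,2}` where each letter's priority equals its value, the
word `1·1` is not block-smaller than `1·2·1`. -/
theorem not_blockLE_insert_higher :
    ¬ BlockLE (fun a : Fin 3 => (a : ℕ)) 2 [1, 1] [1, 2, 1] := fun h =>
  absurd (h.forall_prio_le_of_forall_prio_le (by simp) (by decide) 2 (by simp)) (by decide)
end

section
/- Flatness is necessary in the comparison of block and priority order: over the alphabet {1a, 1b, 0a} where 1a and 1b have priority 1 and 0a has priority 0, the word 1a·0a is block-smaller than 1a·1b·0a but not priority-smaller than it. -/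
lemma PrioEmb_cons_inv {α : Type*} {prio : α → ℕ} {a : α} {u V : List α}
    (h : PrioEmb prio (a :: u) V) :
    ∃ w v, V = w ++ a :: v ∧ (∀ b ∈ w, prio b ≤ prio a) ∧ PrioEmb prio u v := by
  cases h with
  | cons _ w hw h2 => exact ⟨w, _, rfl, hw, h2⟩

lemma PrioEmb_nil_inv {α : Type*} {prio : α → ℕ} {V : List α}
    (h : PrioEmb prio [] V) : V = [] := by
  cases h; rfl

/-- Flatness is necessary: over the alphabet `{1a, 1b, 0a}` (encoded as
`0 = 1a`, `1 = 1b`, `2 = 0a`) where `1a, 1b` have priority `1` and `0a` has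
priority `0`, the word `1a·0a` is block-smaller than `1a·1b·0a` but not
priority-smaller than it. -/
theorem blockLE_not_prioLE_of_not_flat :
    BlockLE (fun a : Fin 3 => if a = 2 then 0 else 1) 1 [0, 2] [0, 1, 2] ∧
    ¬ PrioLE (fun a : Fin 3 => if a = 2 then 0 else 1) [0, 2] [0, 1, 2] := by
  constructor
  · refine Or.inr ⟨[([], 0)], [2], [([], 0), ([], 1)], [2], fun i => 2 * i,
      ?_, ?_, ?_, ?_, ?_, ?_, ?_, rfl, rfl, ?_, ?_⟩
    · rfl
    · rfl
    · simp
    · simp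
    · decide
    · simp
    · intro i j hij hj; dsimp only; simp only [List.length_singleton] at hj; omega
    · intro i hi
      simp only [List.length_singleton] at hi
      interval_cases i
      · simp [blockAt, BlockLE]
      · simp [blockAt, BlockLE]
    · intro i h
      simp only [List.length_singleton] at h
      interval_cases i
      simp [blockSegment, glue, blockAt]
  · rintro (h | h)
    · simp at h
    · obtain ⟨w, v, heq, hw, h2⟩ := PrioEmb_cons_inv h
      obtain ⟨w2, v2, heq2, hw2, h3⟩ := PrioEmb_cons_inv h2
      have hv2 := PrioEmb_nil_inv h3
      subst hv2
      rw [heq2] at heq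
      rcases w with _ | ⟨x, _ | ⟨y, w⟩⟩ <;>
        rcases w2 with _ | ⟨z, _ | ⟨t, w2⟩⟩ <;>
          first
          | (apply_fun List.length at heq; simp at heq <;> omega)
          | simp_all
end
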